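/- Let H be a finite-dimensional Hopf algebra over a field k and let A|B be an H-Galois extension, i.e., A is a right H-comodule algebra with coinvariants B and the Galois map β: A ⊗_B A → A ⊗_k H, β(a ⊗ a') = a a'_{(0)} ⊗ a'_{(1)}, is bijective. If {h_i} and {p_i} are dual bases of H and H*, then setting γ_i(a) = p_i · a and u_i = β^{-1}(1 ⊗ h_i), one has Σ_i a γ_i(a') u_i = a ⊗ a' in A ⊗_B A for all a, a' in A; in particular A|B is a depth two extension. -/

import Mathlib

open TensorProduct

noncomputable section

namespace D2

variable (A : Type*) [Ring A] (B : Subring A)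

/-- The defining relations of `A ⊗_B A` as a quotient of `A ⊗_ℤ A`. -/
def relSub : Submodule ℤ (A ⊗[ℤ] A) :=
  Submodule.span ℤ {x | ∃ (a c : A) (b : B), x = (a * (b : A)) ⊗ₜ[ℤ] c - a ⊗ₜ[ℤ] ((b : A) * c)}

/-- The tensor square `A ⊗_B A` of a ring extension `B ⊆ A`. -/
abbrev TensorSq := (A ⊗[ℤ] A) ⧸ relSub A B

/-- The class of a simple tensor `a ⊗_B c`. -/
def tmulB (a c : A) : TensorSq A B := Submodule.Quotient.mk (a ⊗ₜ[ℤ] c)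

/-- Left multiplication `a₀ • (x ⊗ y) = (a₀ x) ⊗ y` on `A ⊗_B A`. -/
def lmul (a : A) : TensorSq A B →ₗ[ℤ] TensorSq A B :=
  Submodule.mapQ _ _ (TensorProduct.map (LinearMap.mulLeft ℤ a) LinearMap.id) (by
    rw [relSub, Submodule.span_le]
    rintro x ⟨a', c, b, rfl⟩
    simp only [SetLike.mem_coe, Submodule.mem_comap, map_sub, TensorProduct.map_tmul,
      LinearMap.mulLeft_apply, LinearMap.id_apply]
    erw [Submodule.mem_comap, map_sub, TensorProduct.map_tmul, TensorProduct.map_tmul]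
    refine Submodule.subset_span ⟨a * a', c, b, by simp only [LinearMap.mulLeft_apply, LinearMap.id_apply, mul_assoc]⟩)

/-- Right multiplication `(x ⊗ y) • a₀ = x ⊗ (y a₀)` on `A ⊗_B A`. -/
def rmul (a : A) : TensorSq A B →ₗ[ℤ] TensorSq A B :=
  Submodule.mapQ _ _ (TensorProduct.map LinearMap.id (LinearMap.mulRight ℤ a)) (by
    rw [relSub, Submodule.span_le]
    rintro x ⟨a', c, b, rfl⟩
    simp only [SetLike.mem_coe, Submodule.mem_comap, map_sub, TensorProduct.map_tmul,
      LinearMap.mulRight_apply, LinearMap.id_apply]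
    erw [Submodule.mem_comap, map_sub, TensorProduct.map_tmul, TensorProduct.map_tmul]
    refine Submodule.subset_span ⟨a', c * a, b, by simp only [LinearMap.mulRight_apply, LinearMap.id_apply, mul_assoc]⟩)

/-- The multiplication map `A ⊗_B A → A`, `x ⊗ y ↦ x y`. -/
def mulQ : TensorSq A B →ₗ[ℤ] A :=
  Submodule.liftQ _ (LinearMap.mul' ℤ A) (by
    rw [relSub, Submodule.span_le]
    rintro x ⟨a, c, b, rfl⟩
    erw [SetLike.mem_coe, LinearMap.mem_ker]
    erw [map_sub, LinearMap.mul'_apply, LinearMap.mul'_apply]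
    simp [mul_assoc])

/-- An element `t` of `A ⊗_B A` is `B`-central when `b t = t b` for all `b ∈ B`. -/
def IsBCentral (t : TensorSq A B) : Prop := ∀ b ∈ B, lmul A B b t = rmul A B b t

/-- An element `t` of `A ⊗_B A` is `A`-central (a Casimir element) when `a t = t a`. -/
def IsACentral (t : TensorSq A B) : Prop := ∀ a : A, lmul A B a t = rmul A B a t

/-- A `B`-`B`-bimodule endomorphism of `A`. -/
def IsBB (α : A →ₗ[ℤ] A) : Prop :=
  ∀ b ∈ B, ∀ a : A, α ((b : A) * a) = b * α a ∧ α (a * b) = α a * b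

/-- A right `B`-module endomorphism of `A`. -/
def IsRightB (f : A →ₗ[ℤ] A) : Prop := ∀ a : A, ∀ b ∈ B, f (a * b) = f a * b

/-- `x ↦ (x·) ⊗ id` as a linear map, used to build Sweedler-type expressions. -/
def lmulTen : A →ₗ[ℤ] (A ⊗[ℤ] A) →ₗ[ℤ] (A ⊗[ℤ] A) where
  toFun a := TensorProduct.map (LinearMap.mulLeft ℤ a) LinearMap.id
  map_add' a a' := by
    apply TensorProduct.ext'
    intro x y
    simp [add_mul, TensorProduct.add_tmul]
    erw [LinearMap.add_apply, TensorProduct.map_tmul, TensorProduct.map_tmul]; rfl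
  map_smul' z a := by
    apply TensorProduct.ext'
    intro x y
    simp only [TensorProduct.map_tmul, LinearMap.mulLeft_apply, LinearMap.id_apply,
      LinearMap.smul_apply, RingHom.id_apply, smul_mul_assoc, TensorProduct.smul_tmul']
    erw [LinearMap.smul_apply, TensorProduct.map_tmul]; rfl

/-- For `ζ = Σ u ⊗ v`, the map `a ↦ Σ α(a u) v`, i.e. `α(? ζ¹) ζ²`. -/
def sweed (α : A →ₗ[ℤ] A) (ζ : A ⊗[ℤ] A) : A →ₗ[ℤ] A :=
  ((LinearMap.mul' ℤ A).comp (TensorProduct.map α LinearMap.id)).comp ((lmulTen A).flip ζ)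

/-- For `ζ = Σ u ⊗ v`, the element `Σ u r v` ("sandwich" evaluation `ζ¹ r ζ²`). -/
def sandw (r : A) (ζ : A ⊗[ℤ] A) : A :=
  (LinearMap.mul' ℤ A) ((TensorProduct.map (LinearMap.mulRight ℤ r) LinearMap.id) ζ)

/-- `mul₂ ζ ξ = Σ (u x) ⊗ (y v)` for `ζ = Σ u ⊗ v`, `ξ = Σ x ⊗ y`:
the product `ξ ·_T ζ` of two elements of `T = (A ⊗_B A)^B` on representatives. -/
def mul₂ : (A ⊗[ℤ] A) →ₗ[ℤ] (A ⊗[ℤ] A) →ₗ[ℤ] (A ⊗[ℤ] A) :=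
  TensorProduct.lift <| LinearMap.mk₂ ℤ
    (fun u v => TensorProduct.map (LinearMap.mulLeft ℤ u) (LinearMap.mulRight ℤ v))
    (fun u u' v => by
      apply TensorProduct.ext'
      intro x y
      simp [add_mul, TensorProduct.add_tmul]
      erw [LinearMap.add_apply, TensorProduct.map_tmul, TensorProduct.map_tmul]; rfl)
    (fun z u v => by
      apply TensorProduct.ext'
      intro x y
      simp only [TensorProduct.map_tmul, LinearMap.mulLeft_apply, LinearMap.mulRight_apply,
        LinearMap.smul_apply, smul_mul_assoc, TensorProduct.smul_tmul']
      erw [LinearMap.smul_apply, TensorProduct.map_tmul]; rfl)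
    (fun u v v' => by
      apply TensorProduct.ext'
      intro x y
      simp [mul_add, TensorProduct.tmul_add]
      erw [LinearMap.add_apply, TensorProduct.map_tmul, TensorProduct.map_tmul]; rfl)
    (fun z u v => by
      apply TensorProduct.ext'
      intro x y
      simp only [TensorProduct.map_tmul, LinearMap.mulLeft_apply, LinearMap.mulRight_apply,
        LinearMap.smul_apply, mul_smul_comm, TensorProduct.tmul_smul]
      erw [LinearMap.smul_apply, TensorProduct.map_tmul]; rfl)

/-- `A` is balanced as a right `B`-module. -/
def RightBalanced : Prop :=
  ∀ φ : A →+ A,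
    (∀ f : A →+ A, (∀ a : A, ∀ b ∈ B, f (a * b) = f a * b) → ∀ a, φ (f a) = f (φ a)) →
    ∃ b ∈ B, ∀ a, φ a = a * b

end D2

end


open TensorProduct

noncomputable section

/-- The action of a functional `p ∈ H*` on a right `H`-comodule algebra `A`:
`p · a = a₍₀₎ p(a₍₁₎)`. -/
def pact {k A H : Type*} [CommRing k] [Ring A] [Algebra k A] [Ring H] [Algebra k H]
    (ρ : A →ₐ[k] A ⊗[k] H) (p : H →ₗ[k] k) (a : A) : A :=
  (TensorProduct.rid k A) ((LinearMap.lTensor A p) (ρ a))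

section Aux

variable {k : Type*} [Field k] {H : Type*} [Ring H] [Algebra k H]
  {A : Type*} [Ring A] [Algebra k A]

lemma aux_mulLeft (c : A) (x : A ⊗[k] H) :
    TensorProduct.map (LinearMap.mulLeft k c) LinearMap.id x = (c ⊗ₜ[k] (1 : H)) * x := by
  induction x using TensorProduct.induction_on with
  | zero => simp
  | tmul a hh => simp [Algebra.TensorProduct.tmul_mul_tmul]
  | add x y hx hy => simp [mul_add, hx, hy]

lemma aux_pact_left (p : H →ₗ[k] k) (b : A) (x : A ⊗[k] H) :
    (TensorProduct.rid k A) ((LinearMap.lTensor A p) ((b ⊗ₜ[k] (1 : H)) * x)) =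
      b * (TensorProduct.rid k A) ((LinearMap.lTensor A p) x) := by
  induction x using TensorProduct.induction_on with
  | zero => simp
  | tmul a hh => simp [Algebra.TensorProduct.tmul_mul_tmul, mul_smul_comm]
  | add x y hx hy => simp [mul_add, hx, hy]

lemma aux_pact_right (p : H →ₗ[k] k) (b : A) (x : A ⊗[k] H) :
    (TensorProduct.rid k A) ((LinearMap.lTensor A p) (x * (b ⊗ₜ[k] (1 : H)))) =
      (TensorProduct.rid k A) ((LinearMap.lTensor A p) x) * b := by
  induction x using TensorProduct.induction_on with
  | zero => simp
  | tmul a hh => simp [Algebra.TensorProduct.tmul_mul_tmul, smul_mul_assoc]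
  | add x y hx hy => simp [add_mul, hx, hy]

lemma aux_sum (n : ℕ) (h : Fin n → H) (p : Fin n → (H →ₗ[k] k))
    (hdual : ∀ x : H, ∑ i, (p i x) • h i = x) (a : A) (x : A ⊗[k] H) :
    ∑ i, (a * (TensorProduct.rid k A) ((LinearMap.lTensor A (p i)) x)) ⊗ₜ[k] h i
      = (a ⊗ₜ[k] (1 : H)) * x := by
  induction x using TensorProduct.induction_on with
  | zero => simp
  | tmul a0 hh =>
    have step : ∀ i : Fin n,
        (a * (TensorProduct.rid k A) ((LinearMap.lTensor A (p i)) (a0 ⊗ₜ[k] hh))) ⊗ₜ[k] h i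
          = (a * a0) ⊗ₜ[k] ((p i hh) • h i) := by
      intro i
      simp [TensorProduct.tmul_smul, mul_smul_comm, TensorProduct.smul_tmul']
    rw [Finset.sum_congr rfl fun i _ => step i, ← TensorProduct.tmul_sum, hdual,
      Algebra.TensorProduct.tmul_mul_tmul, one_mul]
  | add x y hx hy =>
    simp only [map_add, mul_add, TensorProduct.add_tmul]
    rw [Finset.sum_add_distrib, hx, hy]

end Aux

/-- for a finite `H`-Galois extension `A|B`, dual bases `{hᵢ}`, `{pᵢ}` of `H`
and `H*` yield a right depth two quasibasis `γᵢ = pᵢ · ?`, `uᵢ = β⁻¹(1 ⊗ hᵢ)`: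
`Σᵢ a γᵢ(a') uᵢ = a ⊗ a'`; in particular `A|B` is a depth two extension. -/
theorem stmt1 {k : Type*} [Field k] {H : Type*} [Ring H] [HopfAlgebra k H]
    [FiniteDimensional k H] {A : Type*} [Ring A] [Algebra k A]
    (ρ : A →ₐ[k] A ⊗[k] H)
    (hcounit : ∀ a : A,
      (TensorProduct.rid k A) ((LinearMap.lTensor A (Coalgebra.counit (R := k) (A := H))) (ρ a)) = a)
    (hcoassoc : ∀ a : A,
      (TensorProduct.assoc k A H H) ((LinearMap.rTensor H ρ.toLinearMap) (ρ a)) =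
        (LinearMap.lTensor A (Coalgebra.comul (R := k) (A := H))) (ρ a))
    (B : Subring A) (hB : ∀ a : A, a ∈ B ↔ ρ a = a ⊗ₜ[k] 1)
    -- the Galois map β : A ⊗_B A → A ⊗ H, a ⊗ a' ↦ a a'₍₀₎ ⊗ a'₍₁₎, with inverse βi
    (βf : D2.TensorSq A B →+ (A ⊗[k] H))
    (hβ : ∀ a a' : A, βf (D2.tmulB A B a a') =
      (TensorProduct.map (LinearMap.mulLeft k a) LinearMap.id) (ρ a'))
    (βi : (A ⊗[k] H) →+ D2.TensorSq A B)
    (hli : ∀ x, βi (βf x) = x) (hri : ∀ y, βf (βi y) = y)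
    -- dual bases of H and H*
    (n : ℕ) (h : Fin n → H) (p : Fin n → (H →ₗ[k] k))
    (hdual : ∀ x : H, ∑ i, (p i x) • h i = x) :
    (∀ a a' : A, ∑ i, D2.lmul A B (a * pact ρ (p i) a') (βi (1 ⊗ₜ[k] h i)) =
      D2.tmulB A B a a') ∧
    (∀ i, D2.IsBCentral A B (βi (1 ⊗ₜ[k] h i))) ∧
    (∀ i, ∀ b ∈ B, ∀ a : A,
      pact ρ (p i) ((b : A) * a) = b * pact ρ (p i) a ∧
      pact ρ (p i) (a * b) = pact ρ (p i) a * b) := by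
  -- βf intertwines lmul with left multiplication by `c ⊗ 1`
  have hlmul : ∀ (c : A) (x : D2.TensorSq A B),
      βf (D2.lmul A B c x) = (c ⊗ₜ[k] (1 : H)) * βf x := by
    intro c x
    obtain ⟨y, rfl⟩ := Submodule.Quotient.mk_surjective _ x
    induction y using TensorProduct.induction_on with
    | zero =>
      have : (Submodule.Quotient.mk (0 : A ⊗[ℤ] A) : D2.TensorSq A B) = 0 := rfl
      rw [this]; simp
    | tmul a a' =>
      have h1 : D2.lmul A B c (Submodule.Quotient.mk (a ⊗ₜ[ℤ] a')) =
          D2.tmulB A B (c * a) a' := by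
        simp [D2.lmul, D2.tmulB, Submodule.mapQ_apply]
        erw [Submodule.mapQ_apply, TensorProduct.map_tmul]; rfl
      rw [h1, hβ, show (Submodule.Quotient.mk (a ⊗ₜ[ℤ] a') : D2.TensorSq A B) =
          D2.tmulB A B a a' from rfl, hβ, aux_mulLeft, aux_mulLeft,
        ← mul_assoc, Algebra.TensorProduct.tmul_mul_tmul, one_mul]
    | add y z hy hz =>
      have : (Submodule.Quotient.mk (y + z) : D2.TensorSq A B) =
          Submodule.Quotient.mk y + Submodule.Quotient.mk z := rfl
      rw [this, map_add, map_add, map_add, mul_add, hy, hz]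
  -- βf intertwines rmul with right multiplication by `ρ c`
  have hrmul : ∀ (c : A) (x : D2.TensorSq A B),
      βf (D2.rmul A B c x) = βf x * ρ c := by
    intro c x
    obtain ⟨y, rfl⟩ := Submodule.Quotient.mk_surjective _ x
    induction y using TensorProduct.induction_on with
    | zero =>
      have : (Submodule.Quotient.mk (0 : A ⊗[ℤ] A) : D2.TensorSq A B) = 0 := rfl
      rw [this]; simp
    | tmul a a' =>
      have h1 : D2.rmul A B c (Submodule.Quotient.mk (a ⊗ₜ[ℤ] a')) =
          D2.tmulB A B a (a' * c) := by
        simp [D2.rmul, D2.tmulB, Submodule.mapQ_apply]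
        erw [Submodule.mapQ_apply, TensorProduct.map_tmul]; rfl
      rw [h1, hβ, show (Submodule.Quotient.mk (a ⊗ₜ[ℤ] a') : D2.TensorSq A B) =
          D2.tmulB A B a a' from rfl, hβ, aux_mulLeft, aux_mulLeft, map_mul, mul_assoc]
    | add y z hy hz =>
      have : (Submodule.Quotient.mk (y + z) : D2.TensorSq A B) =
          Submodule.Quotient.mk y + Submodule.Quotient.mk z := rfl
      rw [this, map_add, map_add, map_add, add_mul, hy, hz]
  refine ⟨?_, ?_, ?_⟩
  · intro a a'
    have := hli (∑ i, D2.lmul A B (a * pact ρ (p i) a') (βi (1 ⊗ₜ[k] h i)))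
    rw [← this, ← hli (D2.tmulB A B a a')]
    congr 1
    rw [map_sum, hβ, aux_mulLeft]
    refine Eq.trans (Finset.sum_congr rfl fun i _ => ?_) (aux_sum n h p hdual a (ρ a'))
    rw [hlmul, hri, Algebra.TensorProduct.tmul_mul_tmul, mul_one, one_mul]
    rfl
  · intro i b hb
    rw [← hli (D2.lmul A B b (βi (1 ⊗ₜ[k] h i))), ← hli (D2.rmul A B b (βi (1 ⊗ₜ[k] h i)))]
    congr 1
    rw [hlmul, hrmul, hri, (hB b).mp hb, Algebra.TensorProduct.tmul_mul_tmul,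
      Algebra.TensorProduct.tmul_mul_tmul, one_mul, mul_one, one_mul, mul_one]
  · intro i b hb a
    constructor
    · have : ρ ((b : A) * a) = ((b : A) ⊗ₜ[k] (1 : H)) * ρ a := by
        rw [map_mul, (hB b).mp hb]
      rw [pact, this, aux_pact_left]; rfl
    · have : ρ (a * (b : A)) = ρ a * ((b : A) ⊗ₜ[k] (1 : H)) := by
        rw [map_mul, (hB b).mp hb]
      rw [pact, this, aux_pact_right]; rfl

end
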